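/- arXiv:2402.18952 — 2 statements merged into one kernel-verified Lean document; each statement's English description precedes it below -/
import Mathlib

section
/- Let K be a field of characteristic 2 that is quadratically non-extendable, i.e., every quadratic polynomial over K has a root in K. Consider the list of algebras: S(0,1,1,0,1,1); S(0,1,1,0,1,0); S(0,1,1,1,1,0); and S(0, t²/(1+t²), t/(1+t²), 1, t/(1+t²), 1) for t ∈ K* with t ≠ 1. Then: (1) every endo-commutative algebra S(0,q,a,b,c,d) over K with a ≠ 0 and c ≠ 0 is isomorphic to at least one algebra in this list; (2) any two algebras in the list with distinct parameter tuples are non-isomorphic. -/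
/-!
In characteristic 2, endo-commutativity of `S(0,q,a,b,c,d)` forces `c = a`,
`(q + a)(b + d) = 0` and `q² + a² + ab² + abd + b²q = 0`.

Since `f = e·e`, an isomorphism out of `S(0,q',a',b',c',d')` is determined by the image `u` of
`e`, subject to `u` and `u·u` forming a basis with the right structure constants. In
`S(0,q,a,b,a,d)` the square of `u = (x,y)` is `(0,m)` with `m = x² + (b+d)xy + qy²`, and the
structure constants with respect to `(u, u·u)` are `q' = mq`, `a' = c' = ma`,
`b' = bx + (q+a)y`, `d' = dx + (q+a)y`. Choosing `x` and `y` as roots of quadratics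
normalises every algebra to one of the list. Conversely `q/a` is an isomorphism invariant, and
when `q = a` so is the vanishing of `b` and of `d`; these invariants separate the list.
-/

/-- Multiplication of the 2-dimensional algebra `S(p,q,a,b,c,d)` on `K × K`,
with basis `e = (1,0)`, `f = (0,1)` and table
`e*e = f`, `f*f = p•e + q•f`, `e*f = a•e + b•f`, `f*e = c•e + d•f`. -/
def mulS {K : Type*} [Field K] (p q a b c d : K) (u v : K × K) : K × K :=
  (u.1 * v.2 * a + u.2 * v.1 * c + u.2 * v.2 * p,
   u.1 * v.1 + u.1 * v.2 * b + u.2 * v.1 * d + u.2 * v.2 * q)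

/-- `S(p,q,a,b,c,d)` is endo-commutative: `(x*x)*(y*y) = (x*y)*(x*y)`. -/
def EndoComm {K : Type*} [Field K] (p q a b c d : K) : Prop :=
  ∀ u v : K × K,
    mulS p q a b c d (mulS p q a b c d u u) (mulS p q a b c d v v) =
      mulS p q a b c d (mulS p q a b c d u v) (mulS p q a b c d u v)

/-- `S(p,q,a,b,c,d)` and `S(p',q',a',b',c',d')` are isomorphic: there is a bijective
`K`-linear map between them preserving multiplication. -/
def IsoS {K : Type*} [Field K] (p q a b c d p' q' a' b' c' d' : K) : Prop :=
  ∃ φ : (K × K) ≃ₗ[K] (K × K),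
    ∀ u v : K × K,
      φ (mulS p q a b c d u v) = mulS p' q' a' b' c' d' (φ u) (φ v)

/-- The parameter tuples appearing in the classification list over a
quadratically non-extendable field of characteristic 2. -/
def InListQNE {K : Type*} [Field K] (p q a b c d : K) : Prop :=
  (p, q, a, b, c, d) = ((0 : K), 1, 1, 0, 1, 1) ∨
  (p, q, a, b, c, d) = ((0 : K), 1, 1, 0, 1, 0) ∨
  (p, q, a, b, c, d) = ((0 : K), 1, 1, 1, 1, 0) ∨
  (∃ t : K, t ≠ 0 ∧ t ≠ 1 ∧
      (p, q, a, b, c, d) =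
        ((0 : K), t ^ 2 / (1 + t ^ 2), t / (1 + t ^ 2), 1, t / (1 + t ^ 2), 1))

section

variable {K : Type*} [Field K]

lemma mulS_smul_add_smul (p q a b c d s t s' t' : K) (u w : K × K) :
    mulS p q a b c d (s • u + t • w) (s' • u + t' • w) =
      (s * s') • mulS p q a b c d u u + (s * t') • mulS p q a b c d u w +
        (t * s') • mulS p q a b c d w u + (t * t') • mulS p q a b c d w w := by
  ext <;> simp only [mulS, Prod.fst_add, Prod.snd_add, Prod.smul_fst, Prod.smul_snd,
    smul_eq_mul] <;> ring

lemma LinearMap.apply_eq_fst_smul_add_snd_smul (φ : (K × K) →ₗ[K] (K × K)) (x : K × K) :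
    φ x = x.1 • φ (1, 0) + x.2 • φ (0, 1) := by
  rw [← map_smul, ← map_smul, ← map_add]
  congr 1
  ext <;> simp

theorem isoS_iff_exists_generator {p q a b c d p' q' a' b' c' d' : K} :
    IsoS p q a b c d p' q' a' b' c' d' ↔
      ∃ u : K × K, LinearIndependent K ![u, mulS p' q' a' b' c' d' u u] ∧
        mulS p' q' a' b' c' d' u (mulS p' q' a' b' c' d' u u) =
          a • u + b • mulS p' q' a' b' c' d' u u ∧
        mulS p' q' a' b' c' d' (mulS p' q' a' b' c' d' u u) u =
          c • u + d • mulS p' q' a' b' c' d' u u ∧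
        mulS p' q' a' b' c' d' (mulS p' q' a' b' c' d' u u) (mulS p' q' a' b' c' d' u u) =
          p • u + q • mulS p' q' a' b' c' d' u u := by
  constructor
  · rintro ⟨φ, hφ⟩
    have hf : mulS p' q' a' b' c' d' (φ (1, 0)) (φ (1, 0)) = φ (0, 1) := by
      rw [← hφ]; simp [mulS]
    have hφx (x : K × K) := φ.toLinearMap.apply_eq_fst_smul_add_snd_smul x
    simp only [LinearEquiv.coe_coe] at hφx
    refine ⟨φ (1, 0), LinearIndependent.pair_iff.2 fun s t hst => ?_, ?_, ?_, ?_⟩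
    · have : φ (s, t) = φ 0 := by rw [hφx, map_zero, ← hf, hst]
      simpa using φ.injective this
    all_goals rw [hf, ← hφ, hφx]; simp [mulS]
  · rintro ⟨u, hind, huw, hwu, hww⟩
    generalize hw : mulS p' q' a' b' c' d' u u = w at *
    let φ : (K × K) →ₗ[K] (K × K) :=
      (LinearMap.fst K K K).smulRight u + (LinearMap.snd K K K).smulRight w
    have hinj : Function.Injective φ := by
      refine (injective_iff_map_eq_zero φ).2 fun x hx => ?_
      obtain ⟨h1, h2⟩ := LinearIndependent.pair_iff.1 hind x.1 x.2 hx
      exact Prod.ext h1 h2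
    refine ⟨LinearEquiv.ofInjectiveEndo φ hinj, fun x y => ?_⟩
    simp only [LinearEquiv.coe_ofInjectiveEndo, φ, LinearMap.add_apply,
      LinearMap.smulRight_apply, LinearMap.fst_apply, LinearMap.snd_apply,
      mulS_smul_add_smul, hw, huw, hwu, hww]
    ext <;> simp only [mulS, Prod.fst_add, Prod.snd_add, Prod.smul_fst, Prod.smul_snd,
      smul_eq_mul, smul_add] <;> ring

lemma IsoS.symm {p q a b c d p' q' a' b' c' d' : K} (h : IsoS p q a b c d p' q' a' b' c' d') :
    IsoS p' q' a' b' c' d' p q a b c d := by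
  obtain ⟨φ, hφ⟩ := h
  refine ⟨φ.symm, fun u v => φ.injective ?_⟩
  rw [φ.apply_symm_apply, hφ, φ.apply_symm_apply, φ.apply_symm_apply]

lemma linearIndependent_mk_mk_zero_iff {x y m : K} :
    LinearIndependent K ![(x, y), (0, m)] ↔ x ≠ 0 ∧ m ≠ 0 := by
  constructor
  · intro h
    have hm : m ≠ 0 := fun hm => h.ne_zero 1 (by simp [hm])
    refine ⟨fun hx => hm (h.eq_zero_of_pair (s := m) (t := -y) ?_).1, hm⟩
    ext <;> simp only [hx, Prod.smul_mk, smul_eq_mul, mul_zero, neg_smul, Prod.neg_mk, neg_zero,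
      Prod.mk_add_mk, add_zero, Prod.fst_zero, Prod.snd_zero]
    ring
  · rintro ⟨hx, hm⟩
    refine LinearIndependent.pair_iff.2 fun s t hst => ?_
    have h1 : s * x = 0 := by simpa using congrArg Prod.fst hst
    have hs : s = 0 := (mul_eq_zero.1 h1).resolve_right hx
    have h2 : t * m = 0 := by simpa [hs] using congrArg Prod.snd hst
    exact ⟨hs, (mul_eq_zero.1 h2).resolve_right hm⟩

lemma mulS_mk_zero_mk_zero (q a b d m : K) :
    mulS 0 q a b a d (0, m) (0, m) = (m * q) • (0, m) := by
  ext <;> simp only [mulS, zero_mul, mul_zero, add_zero, zero_add, Prod.smul_mk, smul_eq_mul]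
  ring

lemma InListQNE.p_eq_zero_and_c_eq_a {p q a b c d : K} (h : InListQNE p q a b c d) :
    p = 0 ∧ c = a := by
  rcases h with h | h | h | ⟨t, -, -, h⟩ <;> simp only [Prod.mk.injEq] at h <;>
    exact ⟨h.1, h.2.2.2.2.1.trans h.2.2.1.symm⟩

variable [CharP K 2]

lemma CharTwo.one_add_sq_ne_zero {t : K} (ht : t ≠ 1) : 1 + t ^ 2 ≠ 0 := by
  rw [← one_pow 2, ← CharTwo.add_sq, Ne, pow_eq_zero_iff two_ne_zero, CharTwo.add_eq_zero]
  exact Ne.symm ht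

lemma mulS_mk_self (q a b d x y : K) :
    mulS 0 q a b a d (x, y) (x, y) = (0, x ^ 2 + (b + d) * x * y + q * y ^ 2) := by
  ext
  · simp only [mulS]; linear_combination (x * y * a) * CharTwo.two_eq_zero (R := K)
  · simp only [mulS]; ring

lemma mulS_mk_mk_zero (q a b d x y m : K) :
    mulS 0 q a b a d (x, y) (0, m) = (m * a) • (x, y) + (b * x + (q + a) * y) • (0, m) := by
  ext
  · simp only [mulS, Prod.fst_add, Prod.smul_fst, smul_eq_mul]; ring
  · simp only [mulS, Prod.snd_add, Prod.smul_snd, smul_eq_mul]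
    linear_combination (-(m * a * y)) * CharTwo.two_eq_zero (R := K)

lemma mulS_mk_zero_mk (q a b d x y m : K) :
    mulS 0 q a b a d (0, m) (x, y) = (m * a) • (x, y) + (d * x + (q + a) * y) • (0, m) := by
  ext
  · simp only [mulS, Prod.fst_add, Prod.smul_fst, smul_eq_mul]; ring
  · simp only [mulS, Prod.snd_add, Prod.smul_snd, smul_eq_mul]
    linear_combination (-(m * a * y)) * CharTwo.two_eq_zero (R := K)

theorem isoS_iff_exists_coords {q' a' b' c' d' q a b d : K} :
    IsoS 0 q' a' b' c' d' 0 q a b a d ↔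
      ∃ x y m : K, m = x ^ 2 + (b + d) * x * y + q * y ^ 2 ∧ x ≠ 0 ∧ m ≠ 0 ∧
        q' = m * q ∧ a' = m * a ∧ c' = m * a ∧
        b' = b * x + (q + a) * y ∧ d' = d * x + (q + a) * y := by
  rw [isoS_iff_exists_generator]
  constructor
  · rintro ⟨⟨x, y⟩, hind, huw, hwu, hww⟩
    rw [mulS_mk_self q a b d x y] at hind huw hwu hww
    rw [mulS_mk_mk_zero] at huw
    rw [mulS_mk_zero_mk] at hwu
    rw [mulS_mk_zero_mk_zero, ← zero_add ((_ : K) • _), ← zero_smul K (x, y)] at hww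
    obtain ⟨hx, hm⟩ := linearIndependent_mk_mk_zero_iff.1 hind
    obtain ⟨ha', hb'⟩ := hind.eq_of_pair huw
    obtain ⟨hc', hd'⟩ := hind.eq_of_pair hwu
    obtain ⟨-, hq'⟩ := hind.eq_of_pair hww
    exact ⟨x, y, _, rfl, hx, hm, hq'.symm, ha'.symm, hc'.symm, hb'.symm, hd'.symm⟩
  · rintro ⟨x, y, m, rfl, hx, hm, rfl, rfl, rfl, rfl, rfl⟩
    refine ⟨(x, y), ?_⟩
    rw [mulS_mk_self, linearIndependent_mk_mk_zero_iff, mulS_mk_mk_zero,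
      mulS_mk_zero_mk, mulS_mk_zero_mk_zero, zero_smul, zero_add]
    exact ⟨⟨hx, hm⟩, rfl, rfl, rfl⟩

theorem EndoComm.relations {q a b c d : K} (h : EndoComm 0 q a b c d) :
    c = a ∧ (q + a) * (b + d) = 0 ∧ q ^ 2 + a ^ 2 + a * b ^ 2 + a * b * d + b ^ 2 * q = 0 := by
  have h2 : (2 : K) = 0 := CharTwo.two_eq_zero
  have E1 := h (1, 0) (0, 1)
  have E2 := h (0, 1) (1, 0)
  have E3 := h (1, 1) (1, 0)
  simp only [mulS, Prod.mk.injEq] at E1 E2 E3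
  have hca : c = a := by
    have : (a + c) ^ 2 = 0 := by linear_combination E3.1 - E2.1 + (a * c + c ^ 2) * h2
    exact (CharTwo.add_eq_zero.1 (pow_eq_zero_iff two_ne_zero |>.1 this)).symm
  rw [hca] at E1 E2 E3
  refine ⟨hca, ?_, ?_⟩
  · linear_combination E3.2 - E2.2 + (q * d + a * d) * h2
  · linear_combination E1.2 + (q * b ^ 2 + a * b * d + a * b ^ 2 + a ^ 2) * h2

lemma isoS_of_mul_sq_eq_one {a r : K} (hr : a * r ^ 2 = 1) : IsoS 0 1 1 0 1 0 0 a a 0 a 0 := by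
  have hr0 : r ≠ 0 := by rintro rfl; simp at hr
  refine isoS_iff_exists_coords.2 ⟨r, 0, r ^ 2, by ring, hr0, pow_ne_zero 2 hr0, ?_, ?_, ?_,
    by ring, by ring⟩ <;> linear_combination -hr

lemma isoS_family {q a b : K} (ha : a ≠ 0) (hb : b ≠ 0) (hqa : q ≠ a)
    (hrel : q ^ 2 + a ^ 2 + b ^ 2 * q = 0) :
    IsoS 0 ((q / a) ^ 2 / (1 + (q / a) ^ 2)) ((q / a) / (1 + (q / a) ^ 2)) 1
      ((q / a) / (1 + (q / a) ^ 2)) 1 0 q a b a b := by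
  have h2 : (2 : K) = 0 := CharTwo.two_eq_zero
  have : a ^ 2 + q ^ 2 ≠ 0 := by
    rw [← CharTwo.add_sq]; exact pow_ne_zero 2 fun h => hqa (CharTwo.add_eq_zero.1 h).symm
  refine isoS_iff_exists_coords.2 ⟨b⁻¹, 0, b⁻¹ ^ 2, by ring, inv_ne_zero hb,
    pow_ne_zero 2 (inv_ne_zero hb), ?_, ?_, ?_, by simp [hb], by simp [hb]⟩
  · field_simp
    linear_combination q * hrel - q * (a ^ 2 + q ^ 2) * h2
  all_goals
    field_simp
    linear_combination hrel - (a ^ 2 + q ^ 2) * h2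

lemma isoS_of_add_ne_zero {a b d y : K} (ha : a ≠ 0) (hbd : b + d ≠ 0)
    (hy : a * y ^ 2 + y + ((b + d)⁻¹) ^ 2 + a⁻¹ = 0) :
    IsoS 0 1 1 (b / (b + d)) 1 (d / (b + d)) 0 a a b a d := by
  have h2 : (2 : K) = 0 := CharTwo.two_eq_zero
  have hm : (b + d)⁻¹ ^ 2 + (b + d) * (b + d)⁻¹ * y + a * y ^ 2 = a⁻¹ := by
    rw [mul_inv_cancel₀ hbd]; linear_combination hy - a⁻¹ * h2
  refine isoS_iff_exists_coords.2 ⟨(b + d)⁻¹, y, a⁻¹, hm.symm, inv_ne_zero hbd, inv_ne_zero ha,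
    by field_simp, by field_simp, by field_simp, ?_, ?_⟩ <;>
  · field_simp
    linear_combination -((b + d) * a * y) * h2

theorem exists_inListQNE_isoS_of_commutative
    (hquad : ∀ a b c : K, a ≠ 0 → ∃ x : K, a * x ^ 2 + b * x + c = 0) {q a b : K} (ha : a ≠ 0)
    (hrel : q ^ 2 + a ^ 2 + b ^ 2 * q = 0) :
    ∃ p' q' a' b' c' d' : K, InListQNE p' q' a' b' c' d' ∧ IsoS 0 q a b a b p' q' a' b' c' d' := by
  have h2 : (2 : K) = 0 := CharTwo.two_eq_zero
  rcases eq_or_ne b 0 with rfl | hb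
  · obtain rfl : q = a := CharTwo.sq_injective (by linear_combination hrel - a ^ 2 * h2)
    obtain ⟨r, hr⟩ := hquad q 0 1 ha
    have hr' : q * r ^ 2 = 1 := by linear_combination hr - h2
    exact ⟨_, _, _, _, _, _, Or.inr (Or.inl rfl), (isoS_of_mul_sq_eq_one hr').symm⟩
  · have hq : q ≠ 0 := by
      rintro rfl; exact ha (pow_eq_zero_iff two_ne_zero |>.1 (by simpa using hrel))
    have hqa : q ≠ a := by
      rintro rfl
      exact mul_ne_zero ha (pow_ne_zero 2 hb) (by linear_combination hrel - q ^ 2 * h2)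
    refine ⟨_, _, _, _, _, _, Or.inr (Or.inr (Or.inr ⟨q / a, div_ne_zero hq ha, ?_, rfl⟩)),
      (isoS_family ha hb hqa hrel).symm⟩
    rwa [Ne, div_eq_one_iff_eq ha]

theorem exists_inListQNE_isoS_of_add_ne_zero
    (hquad : ∀ a b c : K, a ≠ 0 → ∃ x : K, a * x ^ 2 + b * x + c = 0) {a b d : K} (ha : a ≠ 0)
    (hbd : b + d ≠ 0) (hbd0 : b * d = 0) :
    ∃ p' q' a' b' c' d' : K, InListQNE p' q' a' b' c' d' ∧ IsoS 0 a a b a d p' q' a' b' c' d' := by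
  obtain ⟨y, hy⟩ := hquad a 1 ((b + d)⁻¹ ^ 2 + a⁻¹) ha
  have hy' : a * y ^ 2 + y + (b + d)⁻¹ ^ 2 + a⁻¹ = 0 := by linear_combination hy
  have hiso := (isoS_of_add_ne_zero ha hbd hy').symm
  rcases mul_eq_zero.1 hbd0 with rfl | rfl
  · simp only [zero_add, zero_div] at hbd hiso
    rw [div_self hbd] at hiso
    exact ⟨_, _, _, _, _, _, Or.inl rfl, hiso⟩
  · simp only [add_zero, zero_div] at hbd hiso
    rw [div_self hbd] at hiso
    exact ⟨_, _, _, _, _, _, Or.inr (Or.inr (Or.inl rfl)), hiso⟩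

theorem exists_inListQNE_isoS (hquad : ∀ a b c : K, a ≠ 0 → ∃ x : K, a * x ^ 2 + b * x + c = 0)
    {q a b c d : K} (ha : a ≠ 0) (h : EndoComm 0 q a b c d) :
    ∃ p' q' a' b' c' d' : K, InListQNE p' q' a' b' c' d' ∧ IsoS 0 q a b c d p' q' a' b' c' d' := by
  have h2 : (2 : K) = 0 := CharTwo.two_eq_zero
  obtain ⟨rfl, hcomm, hrel⟩ := h.relations
  rcases eq_or_ne (b + d) 0 with hbd | hbd
  · obtain rfl := CharTwo.add_eq_zero.1 hbd
    exact exists_inListQNE_isoS_of_commutative hquad ha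
      (by linear_combination hrel - c * b ^ 2 * h2)
  · obtain rfl : q = c := CharTwo.add_eq_zero.1 ((mul_eq_zero.1 hcomm).resolve_right hbd)
    refine exists_inListQNE_isoS_of_add_ne_zero hquad ha hbd ?_
    have : q * (b * d) = 0 := by linear_combination hrel - (q ^ 2 + q * b ^ 2) * h2
    exact (mul_eq_zero.1 this).resolve_left ha

lemma IsoS.mul_eq_mul {q₁ a₁ b₁ c₁ d₁ q₂ a₂ b₂ d₂ : K}
    (h : IsoS 0 q₁ a₁ b₁ c₁ d₁ 0 q₂ a₂ b₂ a₂ d₂) : q₁ * a₂ = q₂ * a₁ := by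
  obtain ⟨x, y, m, -, -, -, rfl, rfl, -⟩ := isoS_iff_exists_coords.1 h
  ring

lemma IsoS.eq_zero_iff {q₁ a₁ b₁ c₁ d₁ a₂ b₂ d₂ : K}
    (h : IsoS 0 q₁ a₁ b₁ c₁ d₁ 0 a₂ a₂ b₂ a₂ d₂) : (b₁ = 0 ↔ b₂ = 0) ∧ (d₁ = 0 ↔ d₂ = 0) := by
  obtain ⟨x, y, m, -, hx, -, -, -, -, rfl, rfl⟩ := isoS_iff_exists_coords.1 h
  simp [CharTwo.add_self_eq_zero, hx]

lemma eq_of_family_mul_eq_mul {s t : K} (hs0 : s ≠ 0) (hs1 : s ≠ 1) (ht0 : t ≠ 0) (ht1 : t ≠ 1)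
    (h : s ^ 2 / (1 + s ^ 2) * (t / (1 + t ^ 2)) = t ^ 2 / (1 + t ^ 2) * (s / (1 + s ^ 2))) :
    s = t := by
  have := CharTwo.one_add_sq_ne_zero hs1
  have := CharTwo.one_add_sq_ne_zero ht1
  field_simp at h
  exact h

theorem InListQNE.eq_of_isoS {p₁ q₁ a₁ b₁ c₁ d₁ p₂ q₂ a₂ b₂ c₂ d₂ : K}
    (h₁ : InListQNE p₁ q₁ a₁ b₁ c₁ d₁) (h₂ : InListQNE p₂ q₂ a₂ b₂ c₂ d₂)
    (h : IsoS p₁ q₁ a₁ b₁ c₁ d₁ p₂ q₂ a₂ b₂ c₂ d₂) :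
    (p₁, q₁, a₁, b₁, c₁, d₁) = (p₂, q₂, a₂, b₂, c₂, d₂) := by
  obtain ⟨rfl, rfl⟩ := h₁.p_eq_zero_and_c_eq_a
  obtain ⟨rfl, rfl⟩ := h₂.p_eq_zero_and_c_eq_a
  rcases h₁ with h₁ | h₁ | h₁ | ⟨s, hs0, hs1, h₁⟩ <;>
    rcases h₂ with h₂ | h₂ | h₂ | ⟨t, ht0, ht1, h₂⟩ <;>
    simp only [Prod.mk.injEq] at h₁ h₂ <;>
    obtain ⟨-, rfl, rfl, rfl, -, rfl⟩ := h₁ <;>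
    obtain ⟨-, rfl, rfl, rfl, -, rfl⟩ := h₂
  -- a family member has `b = d = 1`, which the zero pattern of `(b, d)` separates from the others
  all_goals first
    | rfl
    | exact absurd h.eq_zero_iff (by norm_num)
    | exact absurd h.symm.eq_zero_iff (by norm_num)
    | rw [eq_of_family_mul_eq_mul hs0 hs1 ht0 ht1 h.mul_eq_mul]

end

theorem classification_II1_char_two_quad_nonextendable {K : Type*} [Field K]
    [CharP K 2] (hquad : ∀ a b c : K, a ≠ 0 → ∃ x : K, a * x ^ 2 + b * x + c = 0) :
    (∀ q a b c d : K, a ≠ 0 → c ≠ 0 → EndoComm 0 q a b c d →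
        ∃ p' q' a' b' c' d' : K, InListQNE p' q' a' b' c' d' ∧
          IsoS 0 q a b c d p' q' a' b' c' d') ∧
    (∀ p₁ q₁ a₁ b₁ c₁ d₁ p₂ q₂ a₂ b₂ c₂ d₂ : K,
        InListQNE p₁ q₁ a₁ b₁ c₁ d₁ → InListQNE p₂ q₂ a₂ b₂ c₂ d₂ →
        (p₁, q₁, a₁, b₁, c₁, d₁) ≠ (p₂, q₂, a₂, b₂, c₂, d₂) →
        ¬ IsoS p₁ q₁ a₁ b₁ c₁ d₁ p₂ q₂ a₂ b₂ c₂ d₂) :=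
  ⟨fun _ _ _ _ _ ha _ h => exists_inListQNE_isoS hquad ha h,
    fun _ _ _ _ _ _ _ _ _ _ _ _ h₁ h₂ hne hiso => hne (h₁.eq_of_isoS h₂ hiso)⟩
end

section
/- Let K be a field with char K = 2 and let t, t' ∈ K*. Then the algebras S(0, t, t, t, t, 0) and S(0, t', t', t', t', 0) are isomorphic if and only if 1/t + 1/t' = x² + x for some x ∈ K. -/
/-!
An isomorphism `φ : S(0,t,t,t,t,0) → S(0,t',t',t',t',0)` is pinned down by `φ e = δ e + γ f`:
in characteristic 2 the square of any element has no `e`-component, so `φ f = (φ e)²` is a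
multiple of `f`, and comparing `φ (f f) = t φ f` and `φ (e f) = t (φ e + φ f)` forces
`φ f = δ f` with `t' δ = t`. The remaining condition `(φ e)² = δ f`, i.e.
`δ = δ² + t' δ γ + t' γ²`, becomes `1/t + 1/t' = x² + x` after substituting `x = γ / δ`, and
conversely every such pair `(δ, γ)` defines an isomorphism.
-/

theorem LinearMap.prod_apply_eq_smul_add_smul {R M : Type*} [Semiring R] [AddCommMonoid M]
    [Module R M] (φ : R × R →ₗ[R] M) (x y : R) :
    φ (x, y) = x • φ (1, 0) + y • φ (0, 1) := by
  rw [← map_smul, ← map_smul, ← map_add]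
  simp

section Field

variable {K : Type*} [Field K]

def lowerTriangularEquiv (δ γ : K) (hδ : δ ≠ 0) : (K × K) ≃ₗ[K] (K × K) where
  toFun w := (δ * w.1, γ * w.1 + δ * w.2)
  invFun w := (w.1 / δ, (w.2 - γ * w.1 / δ) / δ)
  map_add' u v := by ext <;> simp <;> ring
  map_smul' c u := by ext <;> simp <;> ring
  left_inv w := by ext <;> field_simp; ring
  right_inv w := by ext <;> field_simp; ring

theorem lowerTriangularEquiv_apply (δ γ : K) (hδ : δ ≠ 0) (w : K × K) :
    lowerTriangularEquiv δ γ hδ w = (δ * w.1, γ * w.1 + δ * w.2) :=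
  rfl

end Field

section CharTwo

variable {K : Type*} [Field K] [CharP K 2] {t t' : K}

theorem isoS_of_lowerTriangular {δ γ : K} (hδ : δ ≠ 0) (hδt : t' * δ = t)
    (hγ : δ = δ ^ 2 + t' * δ * γ + t' * γ ^ 2) :
    IsoS 0 t t t t 0 0 t' t' t' t' 0 := by
  refine ⟨lowerTriangularEquiv δ γ hδ, fun u v => ?_⟩
  have h2 : (2 : K) = 0 := CharTwo.two_eq_zero
  simp only [lowerTriangularEquiv_apply, mulS, Prod.ext_iff]
  constructor
  · linear_combination -(δ * u.1 * v.2 + δ * u.2 * v.1) * hδt - t' * δ * γ * u.1 * v.1 * h2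
  · linear_combination u.1 * v.1 * hγ -
      (γ * u.1 * v.2 + γ * u.2 * v.1 + δ * u.1 * v.2 + δ * u.2 * v.2) * hδt

theorem exists_lowerTriangular_of_isoS (ht : t ≠ 0) (h : IsoS 0 t t t t 0 0 t' t' t' t' 0) :
    ∃ δ γ : K, t' * δ = t ∧ δ = δ ^ 2 + t' * δ * γ + t' * γ ^ 2 := by
  obtain ⟨φ, hφ⟩ := h
  have h2 : (2 : K) = 0 := CharTwo.two_eq_zero
  rcases he : φ (1, 0) with ⟨δ, γ⟩
  rcases hf : φ (0, 1) with ⟨b, ε⟩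
  have hφxy (x y : K) : φ (x, y) = (x * δ + y * b, x * γ + y * ε) := by
    simpa [he, hf, mul_comm] using φ.toLinearMap.prod_apply_eq_smul_add_smul x y
  have hee := hφ (1, 0) (1, 0)
  have hef := hφ (1, 0) (0, 1)
  have hff := hφ (0, 1) (0, 1)
  simp only [mulS, hφxy] at hee hef hff
  norm_num [Prod.ext_iff] at hee hef hff
  obtain ⟨hb, hε⟩ := hee
  obtain ⟨-, hef⟩ := hef
  obtain ⟨-, hff⟩ := hff
  obtain rfl : b = 0 := by linear_combination hb + δ * γ * t' * h2
  have hε0 : ε ≠ 0 := by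
    rintro rfl
    have : φ (0, 1) = φ 0 := by rw [hf, map_zero]; rfl
    simpa using φ.injective this
  have htε : t = t' * ε := mul_right_cancel₀ hε0 (by linear_combination hff)
  have hεδ : ε = δ := mul_left_cancel₀ ht (by linear_combination hef - (δ + γ) * htε)
  subst hεδ
  exact ⟨ε, γ, htε.symm, by linear_combination hε⟩

theorem isoS_iff_exists_lowerTriangular (ht : t ≠ 0) :
    IsoS 0 t t t t 0 0 t' t' t' t' 0 ↔
      ∃ δ γ : K, t' * δ = t ∧ δ = δ ^ 2 + t' * δ * γ + t' * γ ^ 2 := by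
  refine ⟨exists_lowerTriangular_of_isoS ht, fun ⟨δ, γ, hδt, hγ⟩ => ?_⟩
  refine isoS_of_lowerTriangular ?_ hδt hγ
  rintro rfl
  exact ht (by simpa using hδt.symm)

end CharTwo

theorem iso_II1_3_char_two_iff {K : Type*} [Field K] [CharP K 2]
    (t t' : K) (ht : t ≠ 0) (ht' : t' ≠ 0) :
    IsoS 0 t t t t 0 0 t' t' t' t' 0 ↔
      ∃ x : K, 1 / t + 1 / t' = x ^ 2 + x := by
  have h2 : (2 : K) = 0 := CharTwo.two_eq_zero
  rw [isoS_iff_exists_lowerTriangular ht]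
  constructor
  · rintro ⟨δ, γ, rfl, hγ⟩
    have hδ : δ ≠ 0 := right_ne_zero_of_mul ht
    refine ⟨γ / δ, ?_⟩
    field_simp
    linear_combination hγ + δ ^ 2 * h2
  · rintro ⟨x, hx⟩
    refine ⟨t / t', t * x / t', by field_simp, ?_⟩
    field_simp at hx ⊢
    linear_combination hx - t * h2
end
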